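/- Let d be an odd positive integer and n an integer with n > d. Then the family F = {A ⊆ [n] : |A| = (d−1)/2} ∪ {A ⊆ [n] : |A| = (d+1)/2 and 1 ∈ A} contains no 3-chain, has diameter at most d, and has size |F| = C(n,(d−1)/2) + C(n−1,(d−1)/2). -/

import Mathlib

/-!
With `d = 2k + 1`, the family lives on the two consecutive levels `k` and `k + 1`, so a chain
in it has at most two members. Since `|A Δ B| = |A| + |B| - 2|A ∩ B|`, two members are at
distance at most `2k + 1` unless both have size `k + 1`; those all contain `1`, which brings the
distance down to `2k`. The sets of size `k + 1` containing `1` correspond to the `k`-subsets of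
`[n] \ {1}` by deleting `1`.
-/

namespace Finset

variable {α : Type*} [DecidableEq α]

theorem card_sdiff_union_sdiff_add_two_mul_card_inter (A B : Finset α) :
    ((A \ B) ∪ (B \ A)).card + 2 * (A ∩ B).card = A.card + B.card := by
  rw [card_union_of_disjoint disjoint_sdiff_sdiff]
  have hA := card_sdiff_add_card_inter A B
  have hB := card_sdiff_add_card_inter B A
  rw [inter_comm B A] at hB
  omega

theorem card_filter_mem_powersetCard_succ {S : Finset α} {a : α} (ha : a ∈ S) (k : ℕ) :
    ((S.powersetCard (k + 1)).filter (a ∈ ·)).card = (S.card - 1).choose k := by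
  rw [← card_erase_of_mem ha, ← card_powersetCard]
  refine card_nbij' (·.erase a) (insert a) (fun A hA ↦ ?_) (fun B hB ↦ ?_)
    (fun A hA ↦ insert_erase (mem_filter.mp hA).2)
    (fun B hB ↦ erase_insert (subset_erase.mp (mem_powersetCard.mp hB).1).2)
  · rw [mem_coe, mem_filter, mem_powersetCard] at hA
    obtain ⟨⟨hAS, hAcard⟩, haA⟩ := hA
    rw [mem_coe, mem_powersetCard, card_erase_of_mem haA, hAcard]
    exact ⟨erase_subset_erase a hAS, rfl⟩
  · rw [mem_coe, mem_powersetCard, subset_erase] at hB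
    obtain ⟨⟨hBS, haB⟩, hBcard⟩ := hB
    rw [mem_coe, mem_filter, mem_powersetCard, insert_subset_iff, card_insert_of_notMem haB,
      hBcard]
    exact ⟨⟨⟨ha, hBS⟩, rfl⟩, mem_insert_self a B⟩

def twoLevelFamily (S : Finset α) (a : α) (k : ℕ) : Finset (Finset α) :=
  S.powersetCard k ∪ (S.powersetCard (k + 1)).filter (a ∈ ·)

variable {S : Finset α} {a : α} {k : ℕ}

theorem mem_twoLevelFamily {A : Finset α} :
    A ∈ twoLevelFamily S a k ↔ A ⊆ S ∧ (A.card = k ∨ A.card = k + 1 ∧ a ∈ A) := by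
  simp only [twoLevelFamily, mem_union, mem_filter, mem_powersetCard]
  tauto

theorem twoLevelFamily_not_chain3 :
    ¬ ∃ A ∈ twoLevelFamily S a k, ∃ B ∈ twoLevelFamily S a k, ∃ C ∈ twoLevelFamily S a k,
      A ⊂ B ∧ B ⊂ C := by
  rintro ⟨A, hA, B, hB, C, hC, hAB, hBC⟩
  have := card_lt_card hAB
  have := card_lt_card hBC
  rw [mem_twoLevelFamily] at hA hC
  omega

theorem card_symmDiff_le_of_mem_twoLevelFamily {A B : Finset α} (hA : A ∈ twoLevelFamily S a k)
    (hB : B ∈ twoLevelFamily S a k) : ((A \ B) ∪ (B \ A)).card ≤ 2 * k + 1 := by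
  have hcard := card_sdiff_union_sdiff_add_two_mul_card_inter A B
  rw [mem_twoLevelFamily] at hA hB
  rcases hA with ⟨-, hA | ⟨hA, haA⟩⟩ <;> rcases hB with ⟨-, hB | ⟨hB, haB⟩⟩
  any_goals omega
  have : 0 < (A ∩ B).card := card_pos.mpr ⟨a, mem_inter.mpr ⟨haA, haB⟩⟩
  omega

theorem card_twoLevelFamily (ha : a ∈ S) :
    (twoLevelFamily S a k).card = S.card.choose k + (S.card - 1).choose k := by
  have hdisj : Disjoint (S.powersetCard k) ((S.powersetCard (k + 1)).filter (a ∈ ·)) :=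
    disjoint_left.mpr fun A hA hA' ↦ by
      have := (mem_powersetCard.mp hA).2
      have := (mem_powersetCard.mp (mem_filter.mp hA').1).2
      omega
  rw [twoLevelFamily, card_union_of_disjoint hdisj, card_powersetCard,
    card_filter_mem_powersetCard_succ ha]

end Finset

open Finset in
theorem stmt_9_general (d n : ℕ) (hodd : Odd d) (hn : d < n) :
    let F : Finset (Finset ℕ) :=
      ((Finset.Icc 1 n).powerset.filter (fun A => A.card = (d - 1) / 2)) ∪
      ((Finset.Icc 1 n).powerset.filter (fun A => A.card = (d + 1) / 2 ∧ 1 ∈ A))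
    (¬ ∃ A ∈ F, ∃ B ∈ F, ∃ C ∈ F, A ⊂ B ∧ B ⊂ C) ∧
    (∀ A ∈ F, ∀ B ∈ F, ((A \ B) ∪ (B \ A)).card ≤ d) ∧
    F.card = Nat.choose n ((d - 1) / 2) + Nat.choose (n - 1) ((d - 1) / 2) := by
  obtain ⟨k, rfl⟩ := hodd
  rw [show (2 * k + 1 - 1) / 2 = k by omega, show (2 * k + 1 + 1) / 2 = k + 1 by omega]
  intro F
  have hF : F = twoLevelFamily (Icc 1 n) 1 k := by
    ext A
    simp only [F, mem_twoLevelFamily, mem_union, mem_filter, mem_powerset]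
    tauto
  rw [hF, card_twoLevelFamily (mem_Icc.mpr ⟨le_rfl, by omega⟩), Nat.card_Icc, Nat.add_sub_cancel]
  exact ⟨twoLevelFamily_not_chain3, fun A hA B hB ↦ card_symmDiff_le_of_mem_twoLevelFamily hA hB,
    rfl⟩

/-- for odd d > 0 and n > d, the family
F = {A ⊆ [n] : |A| = (d−1)/2} ∪ {A ⊆ [n] : |A| = (d+1)/2, 1 ∈ A} has no 3-chain,
diameter at most d, and size C(n,(d−1)/2) + C(n−1,(d−1)/2). -/
theorem stmt_9 (d n : ℕ) (hodd : Odd d) (hd : 0 < d) (hn : d < n) :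
    let F : Finset (Finset ℕ) :=
      ((Finset.Icc 1 n).powerset.filter (fun A => A.card = (d - 1) / 2)) ∪
      ((Finset.Icc 1 n).powerset.filter (fun A => A.card = (d + 1) / 2 ∧ 1 ∈ A))
    (¬ ∃ A ∈ F, ∃ B ∈ F, ∃ C ∈ F, A ⊂ B ∧ B ⊂ C) ∧
    (∀ A ∈ F, ∀ B ∈ F, ((A \ B) ∪ (B \ A)).card ≤ d) ∧
    F.card = Nat.choose n ((d - 1) / 2) + Nat.choose (n - 1) ((d - 1) / 2) :=
  stmt_9_general d n hodd hn
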